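/- arXiv:1109.2168 — 3 statements merged into one kernel-verified Lean document; each statement's English description precedes it below -/
import Mathlib

section
/- Let C be a vector space over the field 𝔽₂ with two elements, and let ∂, Φ, Ψ, c, U, U′ : C → C be 𝔽₂-linear maps satisfying: ∂∘∂ = 0; U and U′ each commute with ∂, with Φ and with Ψ; ∂∘Φ = Φ∘∂; ∂∘Ψ + Ψ∘∂ = U + U′; Φ∘Φ = 0; ∂∘c + c∘∂ = (U + U′)∘c∘Φ; c∘U = U′∘c; and c∘U′ = U′∘c. Then the map f := c∘Φ∘Ψ satisfies ∂∘f = f∘∂ (it is a chain map) and f∘U = U′∘f. -/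
/-!
Over `𝔽₂` the relation for `c` says that `c ∘ Φ` is already a chain map, because the error term
`(U + U') ∘ c ∘ Φ ∘ Φ` vanishes. Composing with the null-homotopy `Ψ` of `U + U'` keeps it a chain
map, since `c ∘ Φ` kills `U + U'`: both `c ∘ U` and `c ∘ U'` equal `U' ∘ c`, and their sum is zero
in characteristic two. Equivariance is the composite of the semiconjugations of `U` by `c`, `Φ`, `Ψ`.
-/

theorem add_self_eq_zero_of_module_zmod_two {M : Type*} [AddCommGroup M] [Module (ZMod 2) M]
    (x : M) : x + x = 0 := by
  rw [← two_smul (ZMod 2), show (2 : ZMod 2) = 0 from rfl, zero_smul]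

section CharTwo

variable {A : Type*} [Ring A] [Module (ZMod 2) A]

theorem eq_add_of_add_eq_of_zmod_two {a b c : A} (h : a + b = c) : a = c + b := by
  rw [← h, add_assoc, add_self_eq_zero_of_module_zmod_two, add_zero]

theorem commute_mul_of_add_comm_eq_mul {d c Φ y : A} (hc : d * c + c * d = y * Φ)
    (hdΦ : Commute d Φ) (hΦ : Φ * Φ = 0) : Commute d (c * Φ) :=
  calc d * (c * Φ) = (y * Φ + c * d) * Φ := by rw [← mul_assoc, eq_add_of_add_eq_of_zmod_two hc]
    _ = y * (Φ * Φ) + c * (d * Φ) := by noncomm_ring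
    _ = c * Φ * d := by rw [hΦ, hdΦ.eq]; noncomm_ring

theorem Commute.mul_of_add_comm_eq {d g Ψ h : A} (hg : Commute d g) (hΨ : d * Ψ + Ψ * d = h)
    (hgh : g * h = 0) : Commute d (g * Ψ) :=
  calc d * (g * Ψ) = g * (h + Ψ * d) := by
        rw [← mul_assoc, hg.eq, mul_assoc, eq_add_of_add_eq_of_zmod_two hΨ]
    _ = g * Ψ * d := by rw [mul_add, hgh, zero_add, mul_assoc]

theorem mul_add_eq_zero_of_semiconjBy {c U U' : A} (hcU : SemiconjBy c U U')
    (hcU' : SemiconjBy c U' U') : c * (U + U') = 0 := by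
  rw [mul_add, hcU.eq, hcU'.eq, add_self_eq_zero_of_module_zmod_two]

end CharTwo

theorem basepoint_change_chain_map_general
    {C : Type*} [AddCommGroup C] [Module (ZMod 2) C]
    (d Φ Ψ c U U' : C →ₗ[ZMod 2] C)
    (hUΦ : U ∘ₗ Φ = Φ ∘ₗ U) (hUΨ : U ∘ₗ Ψ = Ψ ∘ₗ U)
    (hU'Φ : U' ∘ₗ Φ = Φ ∘ₗ U')
    (hΦ : d ∘ₗ Φ = Φ ∘ₗ d)
    (hΨ : d ∘ₗ Ψ + Ψ ∘ₗ d = U + U')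
    (hΦ2 : Φ ∘ₗ Φ = 0)
    (hc : d ∘ₗ c + c ∘ₗ d = (U + U') ∘ₗ c ∘ₗ Φ)
    (hcU : c ∘ₗ U = U' ∘ₗ c)
    (hcU' : c ∘ₗ U' = U' ∘ₗ c) :
    d ∘ₗ (c ∘ₗ Φ ∘ₗ Ψ) = (c ∘ₗ Φ ∘ₗ Ψ) ∘ₗ d ∧
    (c ∘ₗ Φ ∘ₗ Ψ) ∘ₗ U = U' ∘ₗ (c ∘ₗ Φ ∘ₗ Ψ) := by
  simp only [← Module.End.mul_eq_comp, ← mul_assoc] at *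
  have hΦU : Commute Φ U := hUΦ.symm
  have hΦU' : Commute Φ U' := hU'Φ.symm
  have hΨU : Commute Ψ U := hUΨ.symm
  have hcΦ : Commute d (c * Φ) := commute_mul_of_add_comm_eq_mul hc hΦ hΦ2
  have hcΦ_kills : c * Φ * (U + U') = 0 := by
    rw [mul_assoc, (hΦU.add_right hΦU').eq, ← mul_assoc,
      mul_add_eq_zero_of_semiconjBy hcU hcU', zero_mul]
  exact ⟨(hcΦ.mul_of_add_comm_eq hΨ hcΦ_kills).eq,
    (SemiconjBy.mul_left hcU hΦU).mul_left hΨU⟩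

/-- The algebraic content of the fact that `f_{j,j'} = c ∘ Φ ∘ Ψ` is an
`𝔽₂[U₁,…,U_l]`-equivariant chain map between grid complexes with different
special basepoints. -/
theorem basepoint_change_chain_map
    {C : Type*} [AddCommGroup C] [Module (ZMod 2) C]
    (d Φ Ψ c U U' : C →ₗ[ZMod 2] C)
    (hd : d ∘ₗ d = 0)
    (hUd : U ∘ₗ d = d ∘ₗ U) (hUΦ : U ∘ₗ Φ = Φ ∘ₗ U) (hUΨ : U ∘ₗ Ψ = Ψ ∘ₗ U)
    (hU'd : U' ∘ₗ d = d ∘ₗ U') (hU'Φ : U' ∘ₗ Φ = Φ ∘ₗ U') (hU'Ψ : U' ∘ₗ Ψ = Ψ ∘ₗ U')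
    (hΦ : d ∘ₗ Φ = Φ ∘ₗ d)
    (hΨ : d ∘ₗ Ψ + Ψ ∘ₗ d = U + U')
    (hΦ2 : Φ ∘ₗ Φ = 0)
    (hc : d ∘ₗ c + c ∘ₗ d = (U + U') ∘ₗ c ∘ₗ Φ)
    (hcU : c ∘ₗ U = U' ∘ₗ c)
    (hcU' : c ∘ₗ U' = U' ∘ₗ c) :
    d ∘ₗ (c ∘ₗ Φ ∘ₗ Ψ) = (c ∘ₗ Φ ∘ₗ Ψ) ∘ₗ d ∧
    (c ∘ₗ Φ ∘ₗ Ψ) ∘ₗ U = U' ∘ₗ (c ∘ₗ Φ ∘ₗ Ψ) :=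
  basepoint_change_chain_map_general d Φ Ψ c U U' hUΦ hUΨ hU'Φ hΦ hΨ hΦ2 hc hcU hcU'
end

section
/- Let r̃, r̃′ be Laurent polynomials in ℤ[v,v⁻¹] and let m, m′ be natural numbers. If (1 + v + ⋯ + v^{2m}) + (v⁻¹ + 2 + v)·r̃(v) = (1 + v + ⋯ + v^{2m′}) + (v⁻¹ + 2 + v)·r̃′(v) in ℤ[v,v⁻¹], then m = m′ and r̃ = r̃′. -/
/-!
Evaluate at `v = -1 + ε` in the dual numbers, i.e. take value and first derivative at `v = -1`.
Since `v⁻¹ + 2 + v = v⁻¹ (1 + v)²` has a double root at `-1`, every multiple of it maps to `0`,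
while `1 + v + ⋯ + v^{2m}` maps to `1 - m ε`. So `m` is read off from the `ε`-coefficient, and then
`r̃` is recovered by cancelling the nonzero factor `v⁻¹ + 2 + v` in the domain `ℤ[v, v⁻¹]`.
-/

open LaurentPolynomial DualNumber

section

variable {R : Type*} [CommRing R]

noncomputable def negOneAddEps : (DualNumber R)ˣ where
  val := -1 + ε
  inv := -1 - (ε : DualNumber R)
  val_inv := by linear_combination (-1 : DualNumber R) * eps_mul_eps (R := R)
  inv_val := by linear_combination (-1 : DualNumber R) * eps_mul_eps (R := R)

noncomputable def evalNegOneAddEps : R[T;T⁻¹] →+* DualNumber R :=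
  eval₂ (algebraMap R (DualNumber R)) negOneAddEps

lemma evalNegOneAddEps_T_natCast (n : ℕ) :
    evalNegOneAddEps (T n : R[T;T⁻¹]) = (-1 + ε) ^ n := by
  simp [evalNegOneAddEps, negOneAddEps]

lemma evalNegOneAddEps_T_neg_one_add_two_add_T_one :
    evalNegOneAddEps (T (-1) + 2 + T 1 : R[T;T⁻¹]) = 0 := by
  simp [evalNegOneAddEps, negOneAddEps, map_ofNat]
  ring

lemma evalNegOneAddEps_T_neg_one_add_two_add_T_one_mul (p : R[T;T⁻¹]) :
    evalNegOneAddEps ((T (-1) + 2 + T 1) * p) = 0 := by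
  rw [map_mul, evalNegOneAddEps_T_neg_one_add_two_add_T_one, zero_mul]

lemma neg_one_add_eps_pow_two_mul (k : ℕ) :
    (-1 + ε : DualNumber R) ^ (2 * k) = 1 - 2 * (k : DualNumber R) * ε := by
  induction k with
  | zero => simp
  | succ k ih =>
    rw [mul_add, pow_add, ih]
    push_cast
    linear_combination (1 + 4 * (k : DualNumber R) - 2 * k * ε) * eps_mul_eps (R := R)

lemma evalNegOneAddEps_sum_range_T (m : ℕ) :
    evalNegOneAddEps (∑ i ∈ Finset.range (2 * m + 1), (T i : R[T;T⁻¹])) =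
      1 - (m : DualNumber R) * ε := by
  induction m with
  | zero => simp
  | succ m ih =>
    rw [show 2 * (m + 1) + 1 = 2 * m + 1 + 1 + 1 by ring, Finset.sum_range_succ,
      Finset.sum_range_succ, map_add, map_add, ih, evalNegOneAddEps_T_natCast,
      evalNegOneAddEps_T_natCast, pow_succ _ (2 * m + 1), pow_succ _ (2 * m),
      neg_one_add_eps_pow_two_mul]
    push_cast
    linear_combination (2 * (m : DualNumber R) + 1 - 2 * m * ε) * eps_mul_eps (R := R)

lemma T_neg_one_add_two_add_T_one_ne_zero [CharZero R] :
    (T (-1) + 2 + T 1 : R[T;T⁻¹]) ≠ 0 := by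
  intro h
  have := congrArg (eval₂ (RingHom.id R) 1) h
  norm_num [map_ofNat] at this

end

/-- Uniqueness in Theorem 5.1: the decomposition
`(1 + v + ⋯ + v^{2m}) + (v⁻¹ + 2 + v)·r̃(v)` of a Laurent polynomial determines both `m`
and `r̃`. -/
theorem ladder_decomposition_unique
    (r r' : LaurentPolynomial ℤ) (m m' : ℕ)
    (h : (∑ i ∈ Finset.range (2 * m + 1), (T i : LaurentPolynomial ℤ))
          + (T (-1) + 2 + T 1) * r
        = (∑ i ∈ Finset.range (2 * m' + 1), (T i : LaurentPolynomial ℤ))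
          + (T (-1) + 2 + T 1) * r') :
    m = m' ∧ r = r' := by
  obtain rfl : m = m' := by
    have h_eval := congrArg evalNegOneAddEps h
    simp only [map_add, evalNegOneAddEps_sum_range_T,
      evalNegOneAddEps_T_neg_one_add_two_add_T_one_mul, add_zero] at h_eval
    simpa using congrArg TrivSqZeroExt.snd h_eval
  exact ⟨rfl, mul_left_cancel₀ T_neg_one_add_two_add_T_one_ne_zero (add_left_cancel h)⟩
end

section
/- Let m, m′ be natural numbers. If (1+v)² divides v^{2m} − v^{2m′} in the polynomial ring ℤ[v], then m = m′. -/
open Polynomial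

theorem eval_derivative_eq_zero_of_sq_dvd {R : Type*} [CommSemiring R] {p q : R[X]} {a : R}
    (hq : q.eval a = 0) (h : q ^ 2 ∣ p) : (derivative p).eval a = 0 := by
  have hdvd : q ∣ derivative p := by
    simpa using pow_sub_one_dvd_derivative_of_pow_dvd h
  simpa [hq] using eval_dvd (x := a) hdvd

theorem eval_neg_one_derivative_X_pow_two_mul {R : Type*} [CommRing R] (m : ℕ) :
    (derivative (X ^ (2 * m) : R[X])).eval (-1) = -(2 * m) := by
  rw [derivative_X_pow, eval_mul, eval_C, eval_pow, eval_X]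
  rcases m with _ | k
  · simp
  · rw [show 2 * (k + 1) - 1 = 2 * k + 1 by omega, Odd.neg_one_pow ⟨k, rfl⟩]
    push_cast
    ring

/-- If `(1+X)²` divides `X^{2m} − X^{2m'}` in `ℤ[X]`, then `m = m'`. -/
theorem eq_of_one_add_X_sq_dvd
    (m m' : ℕ)
    (h : (1 + X : ℤ[X]) ^ 2 ∣ (X : ℤ[X]) ^ (2 * m) - X ^ (2 * m')) :
    m = m' := by
  have hroot : (1 + X : ℤ[X]).eval (-1) = 0 := by simp
  have hderiv := eval_derivative_eq_zero_of_sq_dvd hroot h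
  rw [derivative_sub, eval_sub, eval_neg_one_derivative_X_pow_two_mul,
    eval_neg_one_derivative_X_pow_two_mul] at hderiv
  omega
end
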